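/- Let (V,∘) be an associative Novikov algebra and α₀ a bilinear form on V satisfying α₀(a, c∘b) = -α₀(b∘a, c) = -α₀(c∘a, b) for all a,b,c ∈ V. Then φ₀ defined by φ₀(a⊗tᵐ, b⊗tⁿ) := α₀(a,b)δ_{m+n+1,0} is a 2-cocycle of the Leibniz algebra V ⊗ ℂ[t,t⁻¹] with bracket [a⊗tᵐ, b⊗tⁿ] = (m-n)(b∘a)⊗t^{m+n-1}. -/

import Mathlib

open Finsupp

/-!
Both sides of the cocycle identity are trilinear, so it suffices to check it on homogeneous
elements `a⊗tᵐ, b⊗tⁿ, c⊗tᵖ`. Each of the three terms is then `α₀` of some product, times an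
integer, and vanishes unless `m + n + p = 0`. The hypothesis on `α₀` rewrites all three as
multiples of `α₀(a, c∘b)`, with coefficients `n - p`, `-(m - n)` and `-(m - p)`, and
`(n - p) = -(m - n) + (m - p)`.
-/

def IsTwoCocycle {R M : Type*} [CommRing R] [AddCommGroup M] [Module R M]
    (B : M →ₗ[R] M →ₗ[R] M) (φ : M →ₗ[R] M →ₗ[R] R) : Prop :=
  ∀ X Y Z : M, φ X (B Y Z) = φ (B X Y) Z - φ (B X Z) Y

section

variable {R ι V : Type*} [CommRing R] [AddCommGroup V] [Module R V]

theorem isTwoCocycle_of_single {B : (ι →₀ V) →ₗ[R] (ι →₀ V) →ₗ[R] (ι →₀ V)}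
    {φ : (ι →₀ V) →ₗ[R] (ι →₀ V) →ₗ[R] R}
    (h : ∀ (m n p : ι) (a b c : V),
      φ (single m a) (B (single n b) (single p c)) =
        φ (B (single m a) (single n b)) (single p c) -
          φ (B (single m a) (single p c)) (single n b)) :
    IsTwoCocycle B φ := by
  intro X Y Z
  induction X using Finsupp.induction_linear with
  | zero => simp
  | add X X' hX hX' => simp only [map_add, LinearMap.add_apply, hX, hX']; ring
  | single m a =>
  induction Y using Finsupp.induction_linear with
  | zero => simp
  | add Y Y' hY hY' => simp only [map_add, LinearMap.add_apply, hY, hY']; ring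
  | single n b =>
  induction Z using Finsupp.induction_linear with
  | zero => simp
  | add Z Z' hZ hZ' => simp only [map_add, LinearMap.add_apply, hZ, hZ']; ring
  | single p c => exact h m n p a b c

variable (circ : V →ₗ[R] V →ₗ[R] V) (a0 : V →ₗ[R] V →ₗ[R] R)
  (B : (ℤ →₀ V) →ₗ[R] (ℤ →₀ V) →ₗ[R] (ℤ →₀ V)) (φ : (ℤ →₀ V) →ₗ[R] (ℤ →₀ V) →ₗ[R] R)

theorem cocycle_single_of_invariant
    (h0 : ∀ a b c : V,
      a0 a (circ c b) = -a0 (circ b a) c ∧ a0 a (circ c b) = -a0 (circ c a) b)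
    (hB : ∀ (m n : ℤ) (a b : V),
      B (single m a) (single n b) = single (m + n - 1) ((m - n) • circ b a))
    (hφ : ∀ (m n : ℤ) (a b : V),
      φ (single m a) (single n b) = if m + n + 1 = 0 then a0 a b else 0)
    (m n p : ℤ) (a b c : V) :
    φ (single m a) (B (single n b) (single p c)) =
      φ (B (single m a) (single n b)) (single p c) -
        φ (B (single m a) (single p c)) (single n b) := by
  simp only [hB, ← smul_single, map_zsmul, LinearMap.smul_apply, hφ]
  by_cases hdeg : m + n + p = 0
  · rw [if_pos (by omega), if_pos (by omega), if_pos (by omega)]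
    obtain ⟨hba, hca⟩ := h0 a b c
    rw [neg_eq_iff_eq_neg.mp hba.symm, neg_eq_iff_eq_neg.mp hca.symm]
    simp only [smul_neg, sub_smul]
    abel
  · rw [if_neg (by omega), if_neg (by omega), if_neg (by omega)]
    simp

end

theorem phi0_is_two_cocycle_general {V : Type*} [AddCommGroup V] [Module ℂ V]
    (circ : V →ₗ[ℂ] V →ₗ[ℂ] V)
    (a0 : V →ₗ[ℂ] V →ₗ[ℂ] ℂ)
    (h0 : ∀ a b c : V,
      a0 a (circ c b) = -a0 (circ b a) c ∧ a0 a (circ c b) = -a0 (circ c a) b)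
    (B : (ℤ →₀ V) →ₗ[ℂ] (ℤ →₀ V) →ₗ[ℂ] (ℤ →₀ V))
    (hB : ∀ (m n : ℤ) (a b : V),
      B (single m a) (single n b) = single (m + n - 1) ((m - n) • circ b a))
    (φ : (ℤ →₀ V) →ₗ[ℂ] (ℤ →₀ V) →ₗ[ℂ] ℂ)
    (hφ : ∀ (m n : ℤ) (a b : V),
      φ (single m a) (single n b) = if m + n + 1 = 0 then a0 a b else 0) :
    ∀ X Y Z : ℤ →₀ V, φ X (B Y Z) = φ (B X Y) Z - φ (B X Z) Y :=
  isTwoCocycle_of_single (cocycle_single_of_invariant circ a0 B φ h0 hB hφ)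

/-- Corollary 4.7 (the `φ₀` part, non-super, trivial bracket): if `α₀` satisfies
`α₀(a, c∘b) = -α₀(b∘a, c) = -α₀(c∘a, b)`, then
`φ₀(a⊗tᵐ, b⊗tⁿ) = α₀(a,b)δ_{m+n+1,0}` is a 2-cocycle of the Leibniz algebra
`V ⊗ ℂ[t,t⁻¹]` with bracket `[a⊗tᵐ, b⊗tⁿ] = (m-n)(b∘a)⊗t^{m+n-1}`. -/
theorem phi0_is_two_cocycle {V : Type*} [AddCommGroup V] [Module ℂ V]
    (circ : V →ₗ[ℂ] V →ₗ[ℂ] V)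
    (h1 : ∀ x y z : V, circ (circ x y) z = circ x (circ y z))
    (h2 : ∀ x y z : V, circ x (circ y z) = circ y (circ x z))
    (a0 : V →ₗ[ℂ] V →ₗ[ℂ] ℂ)
    (h0 : ∀ a b c : V,
      a0 a (circ c b) = -a0 (circ b a) c ∧ a0 a (circ c b) = -a0 (circ c a) b)
    (B : (ℤ →₀ V) →ₗ[ℂ] (ℤ →₀ V) →ₗ[ℂ] (ℤ →₀ V))
    (hB : ∀ (m n : ℤ) (a b : V),
      B (single m a) (single n b) = single (m + n - 1) ((m - n) • circ b a))
    (φ : (ℤ →₀ V) →ₗ[ℂ] (ℤ →₀ V) →ₗ[ℂ] ℂ)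
    (hφ : ∀ (m n : ℤ) (a b : V),
      φ (single m a) (single n b) = if m + n + 1 = 0 then a0 a b else 0) :
    ∀ X Y Z : ℤ →₀ V, φ X (B Y Z) = φ (B X Y) Z - φ (B X Z) Y :=
  phi0_is_two_cocycle_general circ a0 h0 B hB φ hφ
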